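/- Let X₁, X₂, … be independent real random variables with uniformly bounded moments, and suppose m_n = √E[(1/n)Σ_{i=1}^n X_i²] is bounded away from 0. Then the sequence W_n = (X₁/√n, …, X_n/√n) is balanced, i.e., m_n, n²μ₃(w_n²), and n²μ₄(w_n²) are bounded, where w_n = ‖W_n‖. -/

import Mathlib

/-!
The centred squares `Z i = X i ^ 2 - E[X i ^ 2]` are independent, have mean zero and uniformly
bounded moments, and `w_n² - m_n² = (1/n) Σ_{i<n} Z i`. For independent mean-zero summands the
binomial expansion of `E[(S + Z)^k]` loses every term containing a first moment, so
`E[S_n³] = Σ E[Z_i³] = O(n)` and `E[S_{n+1}⁴] = E[S_n⁴] + 6 E[S_n²] E[Z_n²] + E[Z_n⁴]`, whence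
`E[S_n⁴] = O(n²)`. Hence `n² E[(S_n/n)³] = O(1/n)` and `n² E[(S_n/n)⁴] = O(1)`, while `m_n²` is an
average of bounded second moments.
-/

open MeasureTheory ProbabilityTheory Finset

lemma abs_sum_range_le_mul {f : ℕ → ℝ} {C : ℝ} (hf : ∀ i, |f i| ≤ C) (n : ℕ) :
    |∑ i ∈ range n, f i| ≤ n * C :=
  calc |∑ i ∈ range n, f i| ≤ ∑ i ∈ range n, |f i| := abs_sum_le_sum_abs _ _
    _ ≤ ∑ _i ∈ range n, C := sum_le_sum fun i _ => hf i
    _ = n * C := by rw [sum_const, card_range, nsmul_eq_mul]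

section Binomial

variable {Ω : Type*} [MeasurableSpace Ω] {μ : Measure Ω}

lemma integrable_sub_const_pow {Y : Ω → ℝ} (hY : ∀ k : ℕ, Integrable (fun ω => Y ω ^ k) μ)
    (c : ℝ) (k : ℕ) : Integrable (fun ω => (Y ω - c) ^ k) μ := by
  simp_rw [sub_pow]
  exact integrable_finsetSum _ fun j _ => (((hY j).const_mul _).mul_const _).mul_const _

lemma integral_sub_const_pow {Y : Ω → ℝ} (hY : ∀ k : ℕ, Integrable (fun ω => Y ω ^ k) μ)
    (c : ℝ) (k : ℕ) :
    ∫ ω, (Y ω - c) ^ k ∂μ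
      = ∑ j ∈ range (k + 1), (-1) ^ (j + k) * (∫ ω, Y ω ^ j ∂μ) * c ^ (k - j) * k.choose j := by
  simp_rw [sub_pow]
  rw [integral_finsetSum _ fun j _ => (((hY j).const_mul _).mul_const _).mul_const _]
  refine sum_congr rfl fun j _ => ?_
  rw [integral_mul_const, integral_mul_const, integral_const_mul]

lemma exists_bound_abs_integral_sub_const_pow {ι : Type*} {Y : ι → Ω → ℝ} {c : ι → ℝ} {B : ℝ}
    (hY : ∀ i k, Integrable (fun ω => Y i ω ^ k) μ)
    (hmom : ∀ k : ℕ, ∃ C, ∀ i, |∫ ω, Y i ω ^ k ∂μ| ≤ C) (hc : ∀ i, |c i| ≤ B) (k : ℕ) :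
    ∃ C, ∀ i, |∫ ω, (Y i ω - c i) ^ k ∂μ| ≤ C := by
  choose C hC using hmom
  refine ⟨∑ j ∈ range (k + 1), C j * B ^ (k - j) * k.choose j, fun i => ?_⟩
  rw [integral_sub_const_pow (hY i)]
  refine (abs_sum_le_sum_abs _ _).trans (sum_le_sum fun j _ => ?_)
  rw [abs_mul, abs_mul, abs_mul, abs_pow, abs_neg, abs_one, one_pow, one_mul, abs_pow,
    Nat.abs_cast]
  gcongr
  · exact (abs_nonneg _).trans (hC j i)
  · exact hC j i
  · exact hc i

end Binomial

section IndepPair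

variable {Ω : Type*} [MeasurableSpace Ω] {μ : Measure Ω} {s z : Ω → ℝ}

lemma ProbabilityTheory.IndepFun.pow_pow (hsz : s ⟂ᵢ[μ] z) (a b : ℕ) :
    (fun ω => s ω ^ a) ⟂ᵢ[μ] (fun ω => z ω ^ b) :=
  hsz.comp (measurable_id.pow_const a) (measurable_id.pow_const b)

lemma ProbabilityTheory.IndepFun.integrable_add_pow (hsz : s ⟂ᵢ[μ] z)
    (hs : ∀ k : ℕ, Integrable (fun ω => s ω ^ k) μ) (hz : ∀ k : ℕ, Integrable (fun ω => z ω ^ k) μ)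
    (k : ℕ) : Integrable (fun ω => (s ω + z ω) ^ k) μ := by
  simp_rw [add_pow]
  exact integrable_finsetSum _ fun j _ =>
    ((hsz.pow_pow j (k - j)).integrable_mul (hs j) (hz _)).mul_const _

lemma ProbabilityTheory.IndepFun.integral_add_pow (hsz : s ⟂ᵢ[μ] z)
    (hs : ∀ k : ℕ, Integrable (fun ω => s ω ^ k) μ) (hz : ∀ k : ℕ, Integrable (fun ω => z ω ^ k) μ)
    (k : ℕ) :
    ∫ ω, (s ω + z ω) ^ k ∂μ
      = ∑ j ∈ range (k + 1), (∫ ω, s ω ^ j ∂μ) * (∫ ω, z ω ^ (k - j) ∂μ) * k.choose j := by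
  have hint (j : ℕ) : Integrable (fun ω => s ω ^ j * z ω ^ (k - j)) μ :=
    (hsz.pow_pow j (k - j)).integrable_mul (hs j) (hz _)
  simp_rw [add_pow]
  rw [integral_finsetSum _ fun j _ => (hint j).mul_const _]
  refine sum_congr rfl fun j _ => ?_
  rw [integral_mul_const, (hsz.pow_pow j (k - j)).integral_fun_mul_eq_mul_integral
    (hs j).aestronglyMeasurable (hz _).aestronglyMeasurable]

variable [IsProbabilityMeasure μ]

lemma ProbabilityTheory.IndepFun.integral_add_pow_two_of_integral_eq_zero (hsz : s ⟂ᵢ[μ] z)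
    (hs : ∀ k : ℕ, Integrable (fun ω => s ω ^ k) μ) (hz : ∀ k : ℕ, Integrable (fun ω => z ω ^ k) μ)
    (hs0 : ∫ ω, s ω ∂μ = 0) (hz0 : ∫ ω, z ω ∂μ = 0) :
    ∫ ω, (s ω + z ω) ^ 2 ∂μ = ∫ ω, s ω ^ 2 ∂μ + ∫ ω, z ω ^ 2 ∂μ := by
  rw [hsz.integral_add_pow hs hz]
  simp [sum_range_succ, hs0, hz0]
  ring

lemma ProbabilityTheory.IndepFun.integral_add_pow_three_of_integral_eq_zero (hsz : s ⟂ᵢ[μ] z)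
    (hs : ∀ k : ℕ, Integrable (fun ω => s ω ^ k) μ) (hz : ∀ k : ℕ, Integrable (fun ω => z ω ^ k) μ)
    (hs0 : ∫ ω, s ω ∂μ = 0) (hz0 : ∫ ω, z ω ∂μ = 0) :
    ∫ ω, (s ω + z ω) ^ 3 ∂μ = ∫ ω, s ω ^ 3 ∂μ + ∫ ω, z ω ^ 3 ∂μ := by
  rw [hsz.integral_add_pow hs hz]
  simp [sum_range_succ, hs0, hz0]
  ring

lemma ProbabilityTheory.IndepFun.integral_add_pow_four_of_integral_eq_zero (hsz : s ⟂ᵢ[μ] z)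
    (hs : ∀ k : ℕ, Integrable (fun ω => s ω ^ k) μ) (hz : ∀ k : ℕ, Integrable (fun ω => z ω ^ k) μ)
    (hs0 : ∫ ω, s ω ∂μ = 0) (hz0 : ∫ ω, z ω ∂μ = 0) :
    ∫ ω, (s ω + z ω) ^ 4 ∂μ
      = ∫ ω, s ω ^ 4 ∂μ + 6 * (∫ ω, s ω ^ 2 ∂μ) * (∫ ω, z ω ^ 2 ∂μ) + ∫ ω, z ω ^ 4 ∂μ := by
  rw [hsz.integral_add_pow hs hz]
  simp [sum_range_succ, hs0, hz0, Nat.choose]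
  ring

end IndepPair

section IndepSum

variable {Ω : Type*} [MeasurableSpace Ω] {μ : Measure Ω} {Z : ℕ → Ω → ℝ}

lemma integral_sum_range_eq_zero (hint : ∀ i, Integrable (Z i) μ)
    (h0 : ∀ i, ∫ ω, Z i ω ∂μ = 0) (n : ℕ) : ∫ ω, ∑ i ∈ range n, Z i ω ∂μ = 0 := by
  rw [integral_finsetSum _ fun i _ => hint i]
  exact sum_eq_zero fun i _ => h0 i

lemma ProbabilityTheory.iIndepFun.indepFun_sum_range_succ_apply (hZ : iIndepFun Z μ)
    (hmeas : ∀ i, Measurable (Z i)) (n : ℕ) :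
    (fun ω => ∑ i ∈ range n, Z i ω) ⟂ᵢ[μ] Z n := by
  convert hZ.indepFun_sum_range_succ hmeas n using 1
  ext ω
  rw [Finset.sum_apply]

lemma ProbabilityTheory.iIndepFun.integrable_sum_range_pow [IsFiniteMeasure μ]
    (hZ : iIndepFun Z μ) (hmeas : ∀ i, Measurable (Z i))
    (hint : ∀ i k, Integrable (fun ω => Z i ω ^ k) μ) (n k : ℕ) :
    Integrable (fun ω => (∑ i ∈ range n, Z i ω) ^ k) μ := by
  induction n generalizing k with
  | zero => simp
  | succ n ih =>
    simp_rw [sum_range_succ]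
    exact (hZ.indepFun_sum_range_succ_apply hmeas n).integrable_add_pow ih (hint n) k

variable [IsProbabilityMeasure μ]

lemma ProbabilityTheory.iIndepFun.integral_sum_range_pow_two (hZ : iIndepFun Z μ)
    (hmeas : ∀ i, Measurable (Z i)) (hint : ∀ i k, Integrable (fun ω => Z i ω ^ k) μ)
    (h0 : ∀ i, ∫ ω, Z i ω ∂μ = 0) (n : ℕ) :
    ∫ ω, (∑ i ∈ range n, Z i ω) ^ 2 ∂μ = ∑ i ∈ range n, ∫ ω, Z i ω ^ 2 ∂μ := by
  induction n with
  | zero => simp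
  | succ n ih =>
    simp_rw [sum_range_succ]
    rw [(hZ.indepFun_sum_range_succ_apply hmeas n).integral_add_pow_two_of_integral_eq_zero
      (hZ.integrable_sum_range_pow hmeas hint n) (hint n)
      (integral_sum_range_eq_zero (fun i => by simpa using hint i 1) h0 n) (h0 n), ih]

lemma ProbabilityTheory.iIndepFun.integral_sum_range_pow_three (hZ : iIndepFun Z μ)
    (hmeas : ∀ i, Measurable (Z i)) (hint : ∀ i k, Integrable (fun ω => Z i ω ^ k) μ)
    (h0 : ∀ i, ∫ ω, Z i ω ∂μ = 0) (n : ℕ) :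
    ∫ ω, (∑ i ∈ range n, Z i ω) ^ 3 ∂μ = ∑ i ∈ range n, ∫ ω, Z i ω ^ 3 ∂μ := by
  induction n with
  | zero => simp
  | succ n ih =>
    simp_rw [sum_range_succ]
    rw [(hZ.indepFun_sum_range_succ_apply hmeas n).integral_add_pow_three_of_integral_eq_zero
      (hZ.integrable_sum_range_pow hmeas hint n) (hint n)
      (integral_sum_range_eq_zero (fun i => by simpa using hint i 1) h0 n) (h0 n), ih]

lemma ProbabilityTheory.iIndepFun.abs_integral_sum_range_pow_four_le (hZ : iIndepFun Z μ)
    (hmeas : ∀ i, Measurable (Z i)) (hint : ∀ i k, Integrable (fun ω => Z i ω ^ k) μ)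
    (h0 : ∀ i, ∫ ω, Z i ω ∂μ = 0) {σ κ : ℝ} (hσ : ∀ i, |∫ ω, Z i ω ^ 2 ∂μ| ≤ σ)
    (hκ : ∀ i, |∫ ω, Z i ω ^ 4 ∂μ| ≤ κ) (n : ℕ) :
    |∫ ω, (∑ i ∈ range n, Z i ω) ^ 4 ∂μ| ≤ n * κ + 3 * n ^ 2 * σ ^ 2 := by
  induction n with
  | zero => simp
  | succ n ih =>
    have hS2 : |∫ ω, (∑ i ∈ range n, Z i ω) ^ 2 ∂μ| ≤ n * σ := by
      rw [hZ.integral_sum_range_pow_two hmeas hint h0]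
      exact abs_sum_range_le_mul hσ n
    have hσ0 : 0 ≤ σ := (abs_nonneg _).trans (hσ 0)
    simp_rw [sum_range_succ]
    rw [(hZ.indepFun_sum_range_succ_apply hmeas n).integral_add_pow_four_of_integral_eq_zero
      (hZ.integrable_sum_range_pow hmeas hint n) (hint n)
      (integral_sum_range_eq_zero (fun i => by simpa using hint i 1) h0 n) (h0 n)]
    calc _ ≤ |∫ ω, (∑ i ∈ range n, Z i ω) ^ 4 ∂μ|
          + |6 * (∫ ω, (∑ i ∈ range n, Z i ω) ^ 2 ∂μ) * ∫ ω, Z n ω ^ 2 ∂μ|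
          + |∫ ω, Z n ω ^ 4 ∂μ| := abs_add_three _ _ _
      _ = |∫ ω, (∑ i ∈ range n, Z i ω) ^ 4 ∂μ|
          + 6 * |∫ ω, (∑ i ∈ range n, Z i ω) ^ 2 ∂μ| * |∫ ω, Z n ω ^ 2 ∂μ|
          + |∫ ω, Z n ω ^ 4 ∂μ| := by rw [abs_mul, abs_mul, abs_of_pos (by norm_num : (0 : ℝ) < 6)]
      _ ≤ (n * κ + 3 * n ^ 2 * σ ^ 2) + 6 * (n * σ) * σ + κ := by gcongr; exacts [hσ n, hκ n]
      _ ≤ (n + 1 : ℕ) * κ + 3 * (n + 1 : ℕ) ^ 2 * σ ^ 2 := by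
          push_cast
          nlinarith [sq_nonneg σ]

lemma ProbabilityTheory.iIndepFun.abs_mul_integral_average_pow_three_le (hZ : iIndepFun Z μ)
    (hmeas : ∀ i, Measurable (Z i)) (hint : ∀ i k, Integrable (fun ω => Z i ω ^ k) μ)
    (h0 : ∀ i, ∫ ω, Z i ω ∂μ = 0) {τ : ℝ} (hτ : ∀ i, |∫ ω, Z i ω ^ 3 ∂μ| ≤ τ) {n : ℕ}
    (hn : 1 ≤ n) :
    |(n : ℝ) ^ 2 * ∫ ω, ((1 / n) * ∑ i ∈ range n, Z i ω) ^ 3 ∂μ| ≤ τ := by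
  have hn : (0 : ℝ) < n := by exact_mod_cast hn
  simp_rw [mul_pow]
  rw [integral_const_mul, hZ.integral_sum_range_pow_three hmeas hint h0,
    show ∀ x : ℝ, (n : ℝ) ^ 2 * ((1 / n) ^ 3 * x) = x / n from fun x => by field_simp,
    abs_div, abs_of_pos hn, div_le_iff₀ hn, mul_comm]
  exact abs_sum_range_le_mul hτ n

lemma ProbabilityTheory.iIndepFun.abs_mul_integral_average_pow_four_le (hZ : iIndepFun Z μ)
    (hmeas : ∀ i, Measurable (Z i)) (hint : ∀ i k, Integrable (fun ω => Z i ω ^ k) μ)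
    (h0 : ∀ i, ∫ ω, Z i ω ∂μ = 0) {σ κ : ℝ} (hσ : ∀ i, |∫ ω, Z i ω ^ 2 ∂μ| ≤ σ)
    (hκ : ∀ i, |∫ ω, Z i ω ^ 4 ∂μ| ≤ κ) {n : ℕ} (hn : 1 ≤ n) :
    |(n : ℝ) ^ 2 * ∫ ω, ((1 / n) * ∑ i ∈ range n, Z i ω) ^ 4 ∂μ| ≤ κ + 3 * σ ^ 2 := by
  have hn1 : (1 : ℝ) ≤ n := by exact_mod_cast hn
  have hn0 : (0 : ℝ) < n ^ 2 := by positivity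
  have hκ0 : 0 ≤ κ := (abs_nonneg _).trans (hκ 0)
  have hS4 := hZ.abs_integral_sum_range_pow_four_le hmeas hint h0 hσ hκ n
  simp_rw [mul_pow]
  rw [integral_const_mul,
    show ∀ x : ℝ, (n : ℝ) ^ 2 * ((1 / n) ^ 4 * x) = x / n ^ 2 from fun x => by field_simp,
    abs_div, abs_of_pos hn0, div_le_iff₀ hn0]
  nlinarith [mul_le_mul_of_nonneg_right (le_self_pow₀ hn1 two_ne_zero) hκ0]

end IndepSum

theorem normalized_sequence_balanced_general
    {Ω : Type*} [MeasurableSpace Ω] (μ : Measure Ω) [IsProbabilityMeasure μ]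
    (X : ℕ → Ω → ℝ) (hmeas : ∀ i, Measurable (X i))
    (hindep : ProbabilityTheory.iIndepFun X μ)
    (hintk : ∀ i k, Integrable (fun ω => (X i ω)^k) μ)
    (hmom : ∀ k : ℕ, ∃ C : ℝ, ∀ i, |∫ ω, (X i ω)^k ∂μ| ≤ C)
    (wsq : ℕ → Ω → ℝ)
    (hwsq : ∀ n ω, wsq n ω = (1/(n:ℝ)) * ∑ i ∈ Finset.range n, (X i ω)^2)
    (m : ℕ → ℝ) (hm : ∀ n, m n = Real.sqrt (∫ ω, wsq n ω ∂μ)) :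
    (∃ C : ℝ, ∀ n : ℕ, 1 ≤ n → m n ≤ C)
    ∧ (∃ C : ℝ, ∀ n : ℕ, 1 ≤ n →
        |(n:ℝ)^2 * ∫ ω, (wsq n ω - (m n)^2)^3 ∂μ| ≤ C)
    ∧ (∃ C : ℝ, ∀ n : ℕ, 1 ≤ n →
        |(n:ℝ)^2 * ∫ ω, (wsq n ω - (m n)^2)^4 ∂μ| ≤ C) := by
  obtain ⟨C₂, hC₂⟩ := hmom 2
  set c : ℕ → ℝ := fun i => ∫ ω, X i ω ^ 2 ∂μ
  set Z : ℕ → Ω → ℝ := fun i ω => X i ω ^ 2 - c i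
  have hsq_int (i k : ℕ) : Integrable (fun ω => (X i ω ^ 2) ^ k) μ := by
    simpa only [← pow_mul] using hintk i (2 * k)
  have hsq_mom (k : ℕ) : ∃ C, ∀ i, |∫ ω, (X i ω ^ 2) ^ k ∂μ| ≤ C := by
    simpa only [← pow_mul] using hmom (2 * k)
  have hZ : iIndepFun Z μ := hindep.comp _ fun i => (measurable_id.pow_const 2).sub_const _
  have hZmeas (i : ℕ) : Measurable (Z i) := ((hmeas i).pow_const 2).sub_const _
  have hZint (i k : ℕ) : Integrable (fun ω => Z i ω ^ k) μ :=
    integrable_sub_const_pow (hsq_int i) _ k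
  have hZ0 (i : ℕ) : ∫ ω, Z i ω ∂μ = 0 := by
    simp [Z, integral_sub (hintk i 2) (integrable_const _), c]
  obtain ⟨σ, hσ⟩ := exists_bound_abs_integral_sub_const_pow hsq_int hsq_mom hC₂ 2
  obtain ⟨τ, hτ⟩ := exists_bound_abs_integral_sub_const_pow hsq_int hsq_mom hC₂ 3
  obtain ⟨κ, hκ⟩ := exists_bound_abs_integral_sub_const_pow hsq_int hsq_mom hC₂ 4
  have hmean (n : ℕ) : ∫ ω, wsq n ω ∂μ = 1 / n * ∑ i ∈ range n, c i := by
    simp_rw [hwsq]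
    rw [integral_const_mul, integral_finsetSum _ fun i _ => hintk i 2]
  have hm_sq (n : ℕ) : m n ^ 2 = ∫ ω, wsq n ω ∂μ := by
    rw [hm, Real.sq_sqrt (integral_nonneg fun ω => by rw [hwsq]; positivity)]
  have hcentered (n : ℕ) (ω : Ω) : wsq n ω - m n ^ 2 = 1 / n * ∑ i ∈ range n, Z i ω := by
    rw [hm_sq, hmean, hwsq, ← mul_sub, ← sum_sub_distrib]
  refine ⟨⟨√C₂, fun n hn => ?_⟩, ⟨τ, fun n hn => ?_⟩, ⟨κ + 3 * σ ^ 2, fun n hn => ?_⟩⟩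
  · have hn0 : (0 : ℝ) < n := by exact_mod_cast hn
    rw [hm, hmean, one_div_mul_eq_div]
    refine Real.sqrt_le_sqrt ((div_le_iff₀ hn0).2 ?_)
    exact (le_abs_self _).trans ((abs_sum_range_le_mul hC₂ n).trans_eq (mul_comm _ _))
  · simp_rw [hcentered]
    exact hZ.abs_mul_integral_average_pow_three_le hZmeas hZint hZ0 hτ hn
  · simp_rw [hcentered]
    exact hZ.abs_mul_integral_average_pow_four_le hZmeas hZint hZ0 hσ hκ hn

/-- For independent `X_i` with uniformly bounded moments, if
`m_n = √E[(1/n)Σ X_i²]` is bounded away from `0`, then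
`W_n = (X₁/√n, …, X_n/√n)` is balanced: `m_n`, `n²μ₃(w_n²)` and `n²μ₄(w_n²)`
are bounded. -/
theorem normalized_sequence_balanced
    {Ω : Type*} [MeasurableSpace Ω] (μ : Measure Ω) [IsProbabilityMeasure μ]
    (X : ℕ → Ω → ℝ) (hmeas : ∀ i, Measurable (X i))
    (hindep : ProbabilityTheory.iIndepFun X μ)
    (hintk : ∀ i k, Integrable (fun ω => (X i ω)^k) μ)
    (hmom : ∀ k : ℕ, ∃ C : ℝ, ∀ i, |∫ ω, (X i ω)^k ∂μ| ≤ C)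
    (wsq : ℕ → Ω → ℝ)
    (hwsq : ∀ n ω, wsq n ω = (1/(n:ℝ)) * ∑ i ∈ Finset.range n, (X i ω)^2)
    (m : ℕ → ℝ) (hm : ∀ n, m n = Real.sqrt (∫ ω, wsq n ω ∂μ))
    (b : ℝ) (hb : 0 < b) (hbm : ∀ n : ℕ, 1 ≤ n → b < m n) :
    (∃ C : ℝ, ∀ n : ℕ, 1 ≤ n → m n ≤ C)
    ∧ (∃ C : ℝ, ∀ n : ℕ, 1 ≤ n →
        |(n:ℝ)^2 * ∫ ω, (wsq n ω - (m n)^2)^3 ∂μ| ≤ C)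
    ∧ (∃ C : ℝ, ∀ n : ℕ, 1 ≤ n →
        |(n:ℝ)^2 * ∫ ω, (wsq n ω - (m n)^2)^4 ∂μ| ≤ C) :=
  normalized_sequence_balanced_general μ X hmeas hindep hintk hmom wsq hwsq m hm
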